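/- For each n ≥ 1, κ > 0, and x ∈ [0,1], the degree restricted to the n-th iterated core satisfies d_w^{K^n_κ(w)}(x) = inf_{κ' < κ} d_w^{K^n_{κ'}(w)}(x). -/

import Mathlib

open MeasureTheory Set Filter

/-- A graphon: symmetric measurable `w : [0,1]² → [0,1]` (stated on all of ℝ²). -/
def Graphon (w : ℝ → ℝ → ℝ) : Prop :=
  Measurable (Function.uncurry w) ∧ (∀ x y, w x y = w y x) ∧
    ∀ x y, w x y ∈ Set.Icc (0 : ℝ) 1

/-- Degree of `x` restricted to `K`: `d_w^K(x) = ∫_K w(x,y) dy`. -/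
noncomputable def degK (w : ℝ → ℝ → ℝ) (K : Set ℝ) (x : ℝ) : ℝ := ∫ y in K, w x y

/-- Iterated peeling sets: `coreIter w κ n = K^{n+1}_κ(w)` (so index 0 is `K¹`). -/
noncomputable def coreIter (w : ℝ → ℝ → ℝ) (κ : ℝ) : ℕ → Set ℝ
  | 0 => {x ∈ Set.Icc (0 : ℝ) 1 | κ ≤ degK w (Set.Icc 0 1) x}
  | n + 1 => {x ∈ coreIter w κ n | κ ≤ degK w (coreIter w κ n) x}

/-- The κ-core `K_κ(w) = ⋂ₙ K^n_κ(w)`. -/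
noncomputable def core (w : ℝ → ℝ → ℝ) (κ : ℝ) : Set ℝ := ⋂ n, coreIter w κ n

/-- Shell index `δ_x(w) = sup {κ : x ∈ K_κ(w)}`. -/
noncomputable def shell (w : ℝ → ℝ → ℝ) (x : ℝ) : ℝ := sSup {κ | x ∈ core w κ}

/-- Degeneracy `δ(w) = sup {κ : |K_κ(w)| > 0}`. -/
noncomputable def degen (w : ℝ → ℝ → ℝ) : ℝ := sSup {κ | 0 < volume (core w κ)}

/-- Cut-norm distance `d_□`. -/
noncomputable def cutDist (w w' : ℝ → ℝ → ℝ) : ℝ :=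
  sSup {r | ∃ S T : Set ℝ, MeasurableSet S ∧ MeasurableSet T ∧
    S ⊆ Set.Icc 0 1 ∧ T ⊆ Set.Icc 0 1 ∧
    r = |∫ x in S, ∫ y in T, (w x y - w' x y)|}

/-- A measure-preserving map of `[0,1]`. -/
def MPMap (σ : ℝ → ℝ) : Prop :=
  Measurable σ ∧ Set.MapsTo σ (Set.Icc 0 1) (Set.Icc 0 1) ∧
    ∀ A : Set ℝ, MeasurableSet A → A ⊆ Set.Icc 0 1 →
      volume (σ ⁻¹' A ∩ Set.Icc 0 1) = volume A

/-- Cut metric `δ_□(w,w') = inf_σ d_□(w^σ, w')`. -/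
noncomputable def cutMetric (w w' : ℝ → ℝ → ℝ) : ℝ :=
  sInf {r | ∃ σ : ℝ → ℝ, MPMap σ ∧ r = cutDist (fun x y => w (σ x) (σ y)) w'}


section Aux

variable {w : ℝ → ℝ → ℝ}

lemma degK_measurable (hw : Graphon w) (K : Set ℝ) : Measurable (degK w K) := by
  have : StronglyMeasurable (fun x => ∫ y in K, (Function.uncurry w) (x, y)) :=
    hw.1.stronglyMeasurable.integral_prod_right'
  exact this.measurable

lemma coreIter_subset (hw : Graphon w) (κ : ℝ) (n : ℕ) :
    coreIter w κ n ⊆ Set.Icc (0 : ℝ) 1 := by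
  induction n with
  | zero => exact fun x hx => hx.1
  | succ n ih => exact fun x hx => ih hx.1

lemma coreIter_measurable (hw : Graphon w) (κ : ℝ) (n : ℕ) :
    MeasurableSet (coreIter w κ n) := by
  induction n with
  | zero =>
    exact measurableSet_Icc.inter ((degK_measurable hw _) measurableSet_Ici)
  | succ n ih =>
    exact ih.inter ((degK_measurable hw _) measurableSet_Ici)

lemma integrableOn_w (hw : Graphon w) (x : ℝ) {K : Set ℝ} (hK : MeasurableSet K)
    (hK1 : K ⊆ Set.Icc (0 : ℝ) 1) : MeasureTheory.IntegrableOn (w x) K := by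
  have hmeas : Measurable (w x) := hw.1.of_uncurry_left
  have hfin : volume K < ⊤ :=
    lt_of_le_of_lt (measure_mono hK1) (by simp)
  refine MeasureTheory.Integrable.mono' (g := fun _ => (1 : ℝ)) ?_ hmeas.aestronglyMeasurable ?_
  · exact MeasureTheory.integrableOn_const hfin.ne
  · filter_upwards with y
    rw [Real.norm_eq_abs, abs_le]
    constructor
    · linarith [(hw.2.2 x y).1]
    · exact (hw.2.2 x y).2

lemma degK_mono (hw : Graphon w) (x : ℝ) {K K' : Set ℝ} (hK : MeasurableSet K)
    (hK' : MeasurableSet K') (hK'1 : K' ⊆ Set.Icc (0 : ℝ) 1) (hsub : K ⊆ K') :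
    degK w K x ≤ degK w K' x := by
  refine MeasureTheory.setIntegral_mono_set (integrableOn_w hw x hK' hK'1) ?_ (Filter.Eventually.of_forall hsub)
  filter_upwards with y
  exact (hw.2.2 x y).1

lemma coreIter_antitone (hw : Graphon w) (n : ℕ) {κ₁ κ₂ : ℝ} (h : κ₁ ≤ κ₂) :
    coreIter w κ₂ n ⊆ coreIter w κ₁ n := by
  induction n with
  | zero => exact fun x hx => ⟨hx.1, le_trans h hx.2⟩
  | succ n ih =>
    intro x hx
    refine ⟨ih hx.1, le_trans h (le_trans hx.2 ?_)⟩
    exact degK_mono hw x (coreIter_measurable hw κ₂ n) (coreIter_measurable hw κ₁ n)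
      (coreIter_subset hw κ₁ n) ih

lemma coreIter_iInter (hw : Graphon w) (κ : ℝ) (n : ℕ) :
    (⋂ m : ℕ, coreIter w (κ - 1 / (m + 1)) n) = coreIter w κ n := by
  have hseq : ∀ m : ℕ, κ - 1 / ((m : ℝ) + 1) < κ := by
    intro m
    have : (0 : ℝ) < 1 / ((m : ℝ) + 1) := by positivity
    linarith
  have htend : Filter.Tendsto (fun m : ℕ => κ - 1 / ((m : ℝ) + 1)) Filter.atTop (nhds κ) := by
    have : Filter.Tendsto (fun n : ℕ => 1 / ((n : ℝ) + 1)) Filter.atTop (nhds 0) := tendsto_one_div_add_atTop_nhds_zero_nat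
    simpa using Filter.Tendsto.const_sub κ this
  induction n with
  | zero =>
    ext y
    simp only [Set.mem_iInter, coreIter, Set.mem_setOf_eq]
    constructor
    · rintro h
      refine ⟨(h 0).1, ?_⟩
      exact le_of_tendsto htend (Filter.Eventually.of_forall (fun m => (h m).2))
    · rintro ⟨h1, h2⟩ m
      exact ⟨h1, le_trans (hseq m).le h2⟩
  | succ n ih =>
    apply Set.Subset.antisymm
    · intro y hy
      simp only [Set.mem_iInter] at hy
      have hy1 : y ∈ coreIter w κ n := by
        rw [← ih]
        exact Set.mem_iInter.2 fun m => (hy m).1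
      refine ⟨hy1, ?_⟩
      have hanti : Antitone (fun m : ℕ => coreIter w (κ - 1 / ((m : ℝ) + 1)) n) := by
        intro a b hab
        apply coreIter_antitone hw n
        have : ((a : ℝ) + 1) ≤ (b : ℝ) + 1 := by exact_mod_cast by omega
        have h2 : 1 / ((b : ℝ) + 1) ≤ 1 / ((a : ℝ) + 1) :=
          one_div_le_one_div_of_le (by positivity) this
        linarith
      have hconv : Filter.Tendsto (fun m : ℕ => degK w (coreIter w (κ - 1 / ((m : ℝ) + 1)) n) y)
          Filter.atTop (nhds (degK w (coreIter w κ n) y)) := by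
        have := MeasureTheory.tendsto_setIntegral_of_antitone
          (f := w y) (μ := volume)
          (fun m : ℕ => coreIter_measurable hw (κ - 1 / ((m : ℝ) + 1)) n) hanti
          ⟨0, integrableOn_w hw y (coreIter_measurable hw _ n) (coreIter_subset hw _ n)⟩
        rwa [ih] at this
      exact le_of_tendsto_of_tendsto' htend hconv (fun m => (hy m).2)
    · intro y hy
      refine Set.mem_iInter.2 fun m => ⟨?_, ?_⟩
      · exact coreIter_antitone hw n (hseq m).le hy.1
      · refine le_trans (hseq m).le (le_trans hy.2 ?_)
        exact degK_mono hw y (coreIter_measurable hw κ n)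
          (coreIter_measurable hw _ n) (coreIter_subset hw _ n)
          (coreIter_antitone hw n (hseq m).le)

end Aux

theorem stmt2 (w : ℝ → ℝ → ℝ) (hw : Graphon w) (κ : ℝ) (hκ : 0 < κ) (n : ℕ)
    (x : ℝ) (hx : x ∈ Set.Icc (0 : ℝ) 1) :
    degK w (coreIter w κ n) x = ⨅ κ' : Set.Iio κ, degK w (coreIter w (κ' : ℝ) n) x := by
  set T : ℝ → ℝ := fun κ' => degK w (coreIter w κ' n) x with hT
  have hTanti : ∀ {a b : ℝ}, a ≤ b → T b ≤ T a := by
    intro a b hab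
    exact degK_mono hw x (coreIter_measurable hw b n) (coreIter_measurable hw a n)
      (coreIter_subset hw a n) (coreIter_antitone hw n hab)
  have hTnonneg : ∀ a, 0 ≤ T a := by
    intro a
    apply MeasureTheory.setIntegral_nonneg (coreIter_measurable hw a n)
    intro y _
    exact (hw.2.2 x y).1
  have hbdd : BddBelow (Set.range fun κ' : Set.Iio κ => T (κ' : ℝ)) :=
    ⟨0, by rintro r ⟨κ', rfl⟩; exact hTnonneg _⟩
  have hne : Nonempty (Set.Iio κ) := ⟨⟨κ - 1, Set.mem_Iio.mpr (by linarith)⟩⟩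
  apply le_antisymm
  · exact le_ciInf fun κ' => hTanti κ'.2.le
  · -- iInf ≤ T κ via sequence
    have hseq : ∀ m : ℕ, κ - 1 / ((m : ℝ) + 1) < κ := by
      intro m
      have : (0 : ℝ) < 1 / ((m : ℝ) + 1) := by positivity
      linarith
    have htend : Filter.Tendsto (fun m : ℕ => κ - 1 / ((m : ℝ) + 1)) Filter.atTop (nhds κ) := by
      have : Filter.Tendsto (fun n : ℕ => 1 / ((n : ℝ) + 1)) Filter.atTop (nhds 0) := tendsto_one_div_add_atTop_nhds_zero_nat
      simpa using Filter.Tendsto.const_sub κ this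
    have hanti : Antitone (fun m : ℕ => coreIter w (κ - 1 / ((m : ℝ) + 1)) n) := by
      intro a b hab
      apply coreIter_antitone hw n
      have : ((a : ℝ) + 1) ≤ (b : ℝ) + 1 := by exact_mod_cast by omega
      have h2 : 1 / ((b : ℝ) + 1) ≤ 1 / ((a : ℝ) + 1) :=
        one_div_le_one_div_of_le (by positivity) this
      linarith
    have hconv : Filter.Tendsto (fun m : ℕ => T (κ - 1 / ((m : ℝ) + 1)))
        Filter.atTop (nhds (T κ)) := by
      have := MeasureTheory.tendsto_setIntegral_of_antitone
        (f := w x) (μ := volume)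
        (fun m : ℕ => coreIter_measurable hw (κ - 1 / ((m : ℝ) + 1)) n) hanti
        ⟨0, integrableOn_w hw x (coreIter_measurable hw _ n) (coreIter_subset hw _ n)⟩
      rwa [coreIter_iInter hw κ n] at this
    refine ge_of_tendsto hconv (Filter.Eventually.of_forall fun m => ?_)
    exact ciInf_le hbdd (⟨κ - 1 / ((m : ℝ) + 1), hseq m⟩ : Set.Iio κ)
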